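/- Let K₁ and K₂ be nonempty compact convex sets in ℝⁿ, let r and m be integers with 0 ≤ r ≤ m − 2 ≤ n − 3, and let S ⊂ ℝⁿ be a linear subspace of dimension r. Then K₁ and K₂ are homothetic if and only if for every m-dimensional plane L of ℝⁿ whose direction subspace contains S (i.e., every m-dimensional plane containing a translate of S) the orthogonal projections π_L(K₁) and π_L(K₂) are homothetic (where the homothety ratio may depend on L). -/

import Mathlib

/-!
Pass to support functions `h₁ h₂` of `K₁ K₂`. Homothety of the projections onto an admissible
plane `L` says `h₁ = ⟪z, ·⟫ + h₂ (k • ·)` on `L`, and since `dim S + 2 ≤ m`, every 2-plane through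
the origin lies in such an `L`. Comparing widths `h x + h (-x)` along pairs of planes yields a
global ratio `λ > 0`; then the odd, homogeneous functions `f = h₁ - λ h₂` and
`g = h₁ - λ h₂ (-·)` are such that on every 2-plane one of them is linear (according to the sign
of `k`). A continuity argument upgrades this to global linearity of `f` or of `g`: a failure of
additivity of `f` at `(u, v)` persists on nearby planes, which forces `g` to be linear on a cone
around `span {u, v}`; in dimension three every plane meets that cone, so `g` is additive. In
general this makes `g` additive along `span {u, v}`, and a failure of additivity of `g` would then
make `f` affine on translates of `span {u, v}`, hence additive at `(u, v)`.
Linearity of `f` (resp. `g`) reads `h₁ = ⟪z, ·⟫ + h₂ (±λ • ·)`, i.e. `K₁ = z ± λ K₂`.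
-/

/-- Nonempty sets `X₁` and `X₂` in `ℝⁿ` are *homothetic* provided
`X₁ = z + λ • X₂` for some point `z` and some scalar `λ ≠ 0`. -/
def Homothetic {n : ℕ} (X₁ X₂ : Set (EuclideanSpace ℝ (Fin n))) : Prop :=
  ∃ (z : EuclideanSpace ℝ (Fin n)) (l : ℝ), l ≠ 0 ∧ X₁ = (fun x => z + l • x) '' X₂

/-- The orthogonal projection of `ℝⁿ` onto the plane `p + L`. -/
noncomputable def planeProj {n : ℕ} (p : EuclideanSpace ℝ (Fin n))
    (L : Submodule ℝ (EuclideanSpace ℝ (Fin n))) (x : EuclideanSpace ℝ (Fin n)) :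
    EuclideanSpace ℝ (Fin n) :=
  p + (Submodule.orthogonalProjection L (x - p) : EuclideanSpace ℝ (Fin n))

open Topology Submodule
open scoped RealInnerProductSpace

section LinearOnPlanes

variable {E : Type*} [AddCommGroup E] [Module ℝ E]

def IsLinearOnSpanPair (f : E → ℝ) (x y : E) : Prop :=
  ∀ a b : ℝ, f (a • x + b • y) = a * f x + b * f y

namespace IsLinearOnSpanPair

variable {f : E → ℝ} {x y : E}

theorem map_add (h : IsLinearOnSpanPair f x y) : f (x + y) = f x + f y := by
  simpa using h 1 1

theorem symm (h : IsLinearOnSpanPair f x y) : IsLinearOnSpanPair f y x := fun a b => by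
  rw [add_comm, h b a, add_comm]

theorem comp_linearMap {F : Type*} [AddCommGroup F] [Module ℝ F] (T : F →ₗ[ℝ] E) {ξ η : F}
    (h : IsLinearOnSpanPair f (T ξ) (T η)) : IsLinearOnSpanPair (f ∘ T) ξ η := fun a b => by
  simpa using h a b

theorem apply_add_smul_eq {w : E} {σ τ : ℝ} (hτ : τ ≠ 0)
    (h₁ : IsLinearOnSpanPair f x (y + τ • w)) (h₂ : IsLinearOnSpanPair f (x + σ • w) y) :
    f (x + σ • w) = f x + σ / τ * (f (y + τ • w) - f y) := by
  have e₁ := h₁ 1 (σ / τ)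
  have e₂ := h₂ 1 (σ / τ)
  rw [show (1 : ℝ) • x + (σ / τ) • (y + τ • w) = (1 : ℝ) • (x + σ • w) + (σ / τ) • y by
    rw [smul_add, smul_smul, div_mul_cancel₀ _ hτ]; module, e₂] at e₁
  linarith

end IsLinearOnSpanPair

theorem isLinearOnSpanPair_smul_right {f : E → ℝ} (hf : ∀ (r : ℝ) x, f (r • x) = r * f x)
    (x : E) (t : ℝ) : IsLinearOnSpanPair f x (t • x) := fun a b => by
  rw [smul_smul, ← add_smul, hf, hf]; ring

end LinearOnPlanes

theorem Continuous.exists_ne_zero_of_eventually {X : Type*} [TopologicalSpace X] {φ : ℝ → X}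
    (hφ : Continuous φ) {P : X → Prop} (h : ∀ᶠ x in 𝓝 (φ 0), P x) : ∃ t ≠ 0, P (φ t) := by
  have : ∀ᶠ t in 𝓝[≠] (0 : ℝ), P (φ t) ∧ t ≠ 0 :=
    (((hφ.tendsto 0).eventually h).filter_mono nhdsWithin_le_nhds).and self_mem_nhdsWithin
  obtain ⟨t, hPt, ht⟩ := this.exists
  exact ⟨t, ht, hPt⟩

section Dichotomy

variable {E : Type*} [AddCommGroup E] [Module ℝ E] [TopologicalSpace E] [IsTopologicalAddGroup E]
  [ContinuousSMul ℝ E]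

theorem IsLinearOnSpanPair.apply_left_eq_of_eventuallyEq {g : E → ℝ} {x y : E}
    (hg : IsLinearOnSpanPair g x y) (ℓ : E →ₗ[ℝ] ℝ) {α β : ℝ}
    (hgℓ : g =ᶠ[𝓝 (α • x + β • y)] ℓ) : g x = ℓ x := by
  obtain ⟨t, ht, h₁⟩ := Continuous.exists_ne_zero_of_eventually
    (φ := fun t : ℝ => (α + t) • x + β • y) (P := fun p => g p = ℓ p) (by fun_prop)
    (by simp only [add_zero]; exact hgℓ)
  have h₀ := hgℓ.eq_of_nhds
  simp only [hg _ _, LinearMap.map_add, LinearMap.map_smul, smul_eq_mul] at h₀ h₁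
  have : t * (g x - ℓ x) = 0 := by linear_combination h₁ - h₀
  exact sub_eq_zero.mp ((mul_eq_zero.mp this).resolve_left ht)

theorem map_add_of_forall_isLinearOnSpanPair {f : E → ℝ} {U : Set E} (hU : IsOpen U)
    (hne : U.Nonempty) (h : ∀ x ∈ U, ∀ y, IsLinearOnSpanPair f x y) (y z : E) :
    f (y + z) = f y + f z := by
  obtain ⟨x, hx⟩ := hne
  obtain ⟨t, ht, htU⟩ := Continuous.exists_ne_zero_of_eventually (φ := fun t : ℝ => x + t • y)
    (P := (· ∈ U)) (by fun_prop) (by simpa using hU.mem_nhds hx)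
  have h₁ := h _ htU z 1 t
  have h₂ := h x hx y 1 t
  have h₃ := h x hx (y + z) 1 t
  simp only [one_smul, one_mul] at h₁ h₂ h₃
  rw [add_assoc, ← smul_add] at h₁
  have : t * (f (y + z) - (f y + f z)) = 0 := by linear_combination h₁ - h₃ + h₂
  exact sub_eq_zero.mp ((mul_eq_zero.mp this).resolve_left ht)

theorem apply_eq_of_forall_ne_zero {f : E → ℝ} (hf : Continuous f) {c m : E} {b : ℝ}
    (h : ∀ a : ℝ, a ≠ 0 → f (a • c + m) = a * f c + b) : f m = b := by
  simpa using congrFun (Continuous.ext_on (dense_compl_singleton 0)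
    (f := fun a : ℝ => f (a • c + m)) (g := fun a => a * f c + b) (by fun_prop) (by fun_prop)
    h) 0

variable {f g : E → ℝ}

/- A defect of additivity of `f` at `(u, v)` persists at `(u + σ • w, v)` and `(u, v + σ • w)`
for small `σ`, so `g` is linear on those planes; comparing two of them shows that `g` is affine
along `u + ℝ • w` and `v + ℝ • w` near `σ = 0`, with a common slope. -/
theorem exists_isLinearOnSpanPair_add_smul_of_map_add_ne (hf : Continuous f)
    (hfg : ∀ x y, IsLinearOnSpanPair f x y ∨ IsLinearOnSpanPair g x y) {u v : E}
    (huv : f (u + v) ≠ f u + f v) (w : E) :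
    ∃ ε > 0, ∃ c : ℝ, ∀ σ : ℝ, |σ| < ε →
      IsLinearOnSpanPair g (u + σ • w) v ∧ IsLinearOnSpanPair g u (v + σ • w) ∧
      g (u + σ • w) = g u + c * σ ∧ g (v + σ • w) = g v + c * σ := by
  have hlin : ∀ᶠ σ in 𝓝 (0 : ℝ),
      IsLinearOnSpanPair g (u + σ • w) v ∧ IsLinearOnSpanPair g u (v + σ • w) := by
    have h₁ : ∀ᶠ σ in 𝓝 (0 : ℝ), f (u + σ • w + v) ≠ f (u + σ • w) + f v :=
      (isOpen_ne_fun (by fun_prop) (by fun_prop)).mem_nhds (by simpa using huv)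
    have h₂ : ∀ᶠ σ in 𝓝 (0 : ℝ), f (u + (v + σ • w)) ≠ f u + f (v + σ • w) :=
      (isOpen_ne_fun (by fun_prop) (by fun_prop)).mem_nhds (by simpa using huv)
    filter_upwards [h₁, h₂] with σ h₁ h₂
    exact ⟨(hfg _ _).resolve_left fun h => h₁ h.map_add,
      (hfg _ _).resolve_left fun h => h₂ h.map_add⟩
  obtain ⟨ε, hε, hball⟩ := Metric.eventually_nhds_iff.mp hlin
  have hlin' (σ : ℝ) (hσ : |σ| < ε) := hball (y := σ) (by simpa using hσ)
  have hτ : |ε / 2| < ε := by rw [abs_of_pos (by positivity)]; linarith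
  set c := (g (v + (ε / 2) • w) - g v) / (ε / 2)
  have hu : ∀ σ, |σ| < ε → g (u + σ • w) = g u + c * σ := fun σ hσ => by
    rw [(hlin' _ hτ).2.apply_add_smul_eq (by positivity) (hlin' σ hσ).1]; ring
  refine ⟨ε, hε, c, fun σ hσ => ⟨(hlin' σ hσ).1, (hlin' σ hσ).2, hu σ hσ, ?_⟩⟩
  rw [(hlin' _ hτ).1.symm.apply_add_smul_eq (by positivity) (hlin' σ hσ).2.symm, hu _ hτ]
  field_simp
  ring

theorem exists_cone_eq_of_map_add_ne (hf : Continuous f)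
    (hfg : ∀ x y, IsLinearOnSpanPair f x y ∨ IsLinearOnSpanPair g x y) {u v : E}
    (huv : f (u + v) ≠ f u + f v) (w : E) :
    ∃ ε > 0, ∃ c : ℝ, ∀ a b ρ : ℝ, (|ρ| < ε * |a| ∨ |ρ| < ε * |b|) →
      g (a • u + b • v + ρ • w) = a * g u + b * g v + c * ρ := by
  obtain ⟨ε, hε, c, h⟩ := exists_isLinearOnSpanPair_add_smul_of_map_add_ne hf hfg huv w
  refine ⟨ε, hε, c, fun a b ρ hρ => ?_⟩
  rcases hρ with hρ | hρ
  · have ha : a ≠ 0 := by rintro rfl; rw [abs_zero, mul_zero] at hρ; linarith [abs_nonneg ρ]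
    have hσ : |ρ / a| < ε := by rwa [abs_div, div_lt_iff₀ (abs_pos.mpr ha)]
    rw [show a • u + b • v + ρ • w = a • (u + (ρ / a) • w) + b • v by
      rw [smul_add, smul_smul, mul_div_cancel₀ _ ha]; abel, (h _ hσ).1, (h _ hσ).2.2.1]
    field_simp
    ring
  · have hb : b ≠ 0 := by rintro rfl; rw [abs_zero, mul_zero] at hρ; linarith [abs_nonneg ρ]
    have hσ : |ρ / b| < ε := by rwa [abs_div, div_lt_iff₀ (abs_pos.mpr hb)]
    rw [show a • u + b • v + ρ • w = a • u + b • (v + (ρ / b) • w) by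
      rw [smul_add b v, smul_smul, mul_div_cancel₀ _ hb]; abel, (h _ hσ).2.1, (h _ hσ).2.2.2]
    field_simp
    ring

theorem exists_eventuallyEq_linearMap_of_map_add_single_ne {f g : (Fin 3 → ℝ) → ℝ}
    (hf : Continuous f) (hfg : ∀ x y, IsLinearOnSpanPair f x y ∨ IsLinearOnSpanPair g x y)
    (h01 : f (Pi.single 0 1 + Pi.single 1 1) ≠ f (Pi.single 0 1) + f (Pi.single 1 1)) :
    ∃ ℓ : (Fin 3 → ℝ) →ₗ[ℝ] ℝ, ∀ ξ : Fin 3 → ℝ, ξ 2 = 0 → ξ ≠ 0 → g =ᶠ[𝓝 ξ] ℓ := by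
  obtain ⟨ε, hε, c, hcone⟩ := exists_cone_eq_of_map_add_ne hf hfg h01 (Pi.single 2 1)
  refine ⟨g (Pi.single 0 1) • LinearMap.proj 0 + g (Pi.single 1 1) • LinearMap.proj 1 +
    c • LinearMap.proj 2, fun ξ hξ2 hξ => ?_⟩
  have hC : ∀ᶠ η in 𝓝 ξ, |η 2| < ε * |η 0| ∨ |η 2| < ε * |η 1| := by
    have : ξ 0 ≠ 0 ∨ ξ 1 ≠ 0 := by
      by_contra! h
      exact hξ (funext fun i => by fin_cases i <;> simp [h, hξ2])
    have h2 : ContinuousAt (fun η : Fin 3 → ℝ => |η 2|) ξ :=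
      (by fun_prop : Continuous _).continuousAt
    rcases this with h | h
    · exact (h2.eventually_lt (g := fun η => ε * |η 0|) (by fun_prop : Continuous _).continuousAt
        (by simpa [hξ2] using mul_pos hε (abs_pos.mpr h))).mono fun _ => .inl
    · exact (h2.eventually_lt (g := fun η => ε * |η 1|) (by fun_prop : Continuous _).continuousAt
        (by simpa [hξ2] using mul_pos hε (abs_pos.mpr h))).mono fun _ => .inr
  filter_upwards [hC] with η hη
  have hdec : η 0 • Pi.single 0 1 + η 1 • Pi.single 1 1 + η 2 • Pi.single 2 1 = η := by
    funext i; fin_cases i <;> simp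
  rw [← hdec, hcone _ _ _ hη, hdec]
  simp only [LinearMap.add_apply, LinearMap.smul_apply, LinearMap.proj_apply, smul_eq_mul]
  ring

/- If `g x ≠ ℓ x` for the `ℓ` of `exists_eventuallyEq_linearMap_of_map_add_single_ne`, then `g`
cannot be linear on a plane through `x` (each one meets `{ξ 2 = 0}` off the origin), so `f` is
linear on every plane through every point near `x`, which makes `f` additive. -/
theorem map_add_of_map_add_single_ne {f g : (Fin 3 → ℝ) → ℝ} (hf : Continuous f)
    (hg : Continuous g) (hfh : ∀ (r : ℝ) x, f (r • x) = r * f x)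
    (hgh : ∀ (r : ℝ) x, g (r • x) = r * g x)
    (hfg : ∀ x y, IsLinearOnSpanPair f x y ∨ IsLinearOnSpanPair g x y)
    (h01 : f (Pi.single 0 1 + Pi.single 1 1) ≠ f (Pi.single 0 1) + f (Pi.single 1 1))
    (x y : Fin 3 → ℝ) : g (x + y) = g x + g y := by
  obtain ⟨ℓ, hℓ⟩ := exists_eventuallyEq_linearMap_of_map_add_single_ne hf hfg h01
  suffices ∀ ξ, g ξ = ℓ ξ by simp only [this, map_add]
  by_contra! hU
  refine h01 (map_add_of_forall_isLinearOnSpanPair (U := {ξ | g ξ ≠ ℓ ξ})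
    (isOpen_ne_fun hg ℓ.continuous_of_finiteDimensional) hU (fun x hx y => ?_) _ _)
  have hx0 : x ≠ 0 := by rintro rfl; exact hx (by simpa using hgh 0 0)
  rcases eq_or_ne (x 2) 0 with hx2 | hx2
  · exact absurd (hℓ x hx2 hx0).eq_of_nhds hx
  by_cases hp : y 2 • x + (-x 2) • y = 0
  · have : y = (y 2 / x 2) • x := funext fun i => by
      have := congrFun hp i
      simp only [Pi.add_apply, Pi.smul_apply, smul_eq_mul, Pi.zero_apply] at this ⊢
      field_simp
      linarith
    rw [this]
    exact isLinearOnSpanPair_smul_right hfh x _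
  have hp2 : (y 2 • x + (-x 2) • y) 2 = 0 := by
    simp only [Pi.add_apply, Pi.smul_apply, smul_eq_mul]; ring
  exact (hfg x y).resolve_right fun hgxy =>
    hx (hgxy.apply_left_eq_of_eventuallyEq ℓ (hℓ _ hp2 hp))

/- The defect of `g` at `(c + m, d + m')` is that at `(c, d)`, so `f` is linear on all planes
through `c + m` and `d + m'`. This makes `f` affine on `c + P`, and homogeneity and continuity
carry the linear part over to `P`. -/
theorem map_add_of_map_add_ne_of_forall_add_mem (hf : Continuous f)
    (hfh : ∀ (r : ℝ) x, f (r • x) = r * f x)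
    (hfg : ∀ x y, IsLinearOnSpanPair f x y ∨ IsLinearOnSpanPair g x y) {P : Submodule ℝ E}
    (hgP : ∀ x, ∀ m ∈ P, g (x + m) = g x + g m) {c d : E} (hcd : g (c + d) ≠ g c + g d)
    {m m' : E} (hm : m ∈ P) (hm' : m' ∈ P) : f (m + m') = f m + f m' := by
  have hlin : ∀ m ∈ P, ∀ m' ∈ P, IsLinearOnSpanPair f (c + m) (d + m') := by
    intro m hm m' hm'
    refine (hfg _ _).resolve_right fun h => hcd ?_
    have := h.map_add
    rw [show c + m + (d + m') = c + d + (m + m') by abel, hgP _ _ (P.add_mem hm hm'),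
      hgP _ _ hm', hgP _ _ hm, hgP _ _ hm'] at this
    linarith
  have hshift : ∀ m ∈ P, ∀ m' ∈ P, ∀ t : ℝ,
      f (c + (m + t • m')) = f (c + m) + t * (f (d + m') - f d) := by
    intro m hm m' hm' t
    have e₁ := hlin m hm m' hm' 1 t
    have e₂ := hlin _ (P.add_mem hm (P.smul_mem t hm')) 0 P.zero_mem 1 t
    rw [show (1 : ℝ) • (c + m) + t • (d + m') = (1 : ℝ) • (c + (m + t • m')) + t • (d + 0) by
      module, e₂] at e₁
    simp only [add_zero, one_mul] at e₁
    linarith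
  have hdc : ∀ m' ∈ P, f (d + m') - f d = f (c + m') - f c := fun m' hm' => by
    have := hshift 0 P.zero_mem m' hm' 1
    simp only [zero_add, one_smul, add_zero, one_mul] at this
    linarith
  have hP : ∀ m ∈ P, f m = f (c + m) - f c := fun m hm =>
    apply_eq_of_forall_ne_zero hf fun a ha => by
      have := hshift 0 P.zero_mem m hm a⁻¹
      simp only [zero_add, add_zero, hdc m hm] at this
      rw [show a • c + m = a • (c + a⁻¹ • m) by
        rw [smul_add, smul_smul, mul_inv_cancel₀ ha, one_smul], hfh, this]
      field_simp
  have := hshift m hm m' hm' 1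
  rw [one_smul, one_mul, hdc m' hm'] at this
  rw [hP _ (P.add_mem hm hm'), hP m hm, hP m' hm', this]
  ring

theorem map_add_of_mem_span_pair_of_map_add_ne (hf : Continuous f) (hg : Continuous g)
    (hfh : ∀ (r : ℝ) x, f (r • x) = r * f x) (hgh : ∀ (r : ℝ) x, g (r • x) = r * g x)
    (hfg : ∀ x y, IsLinearOnSpanPair f x y ∨ IsLinearOnSpanPair g x y) {u v : E}
    (huv : f (u + v) ≠ f u + f v) (x : E) {m : E} (hm : m ∈ span ℝ {u, v}) :
    g (x + m) = g x + g m := by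
  obtain ⟨a, b, rfl⟩ := mem_span_pair.mp hm
  let T := Fintype.linearCombination ℝ ![u, v, x]
  have hT : Continuous T := T.continuous_of_finiteDimensional
  have hTe (i : Fin 3) : T (Pi.single i 1) = ![u, v, x] i := by
    simp [T, Fintype.linearCombination_apply_single]
  have := map_add_of_map_add_single_ne (f := f ∘ T) (g := g ∘ T) (hf.comp hT) (hg.comp hT)
    (fun r ξ => by simp [hfh]) (fun r ξ => by simp [hgh])
    (fun ξ η => (hfg (T ξ) (T η)).imp (.comp_linearMap T) (.comp_linearMap T))
    (by simpa [hTe] using huv) (Pi.single 2 1) (a • Pi.single 0 1 + b • Pi.single 1 1)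
  simpa [hTe] using this

theorem map_add_or_map_add_of_isLinearOnSpanPair (hf : Continuous f) (hg : Continuous g)
    (hfh : ∀ (r : ℝ) x, f (r • x) = r * f x) (hgh : ∀ (r : ℝ) x, g (r • x) = r * g x)
    (hfg : ∀ x y, IsLinearOnSpanPair f x y ∨ IsLinearOnSpanPair g x y) :
    (∀ x y, f (x + y) = f x + f y) ∨ (∀ x y, g (x + y) = g x + g y) := by
  by_contra! h
  obtain ⟨⟨u, v, huv⟩, c, d, hcd⟩ := h
  exact huv (map_add_of_map_add_ne_of_forall_add_mem hf hfh hfg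
    (fun x _ hm => map_add_of_mem_span_pair_of_map_add_ne hf hg hfh hgh hfg huv x hm) hcd
    (subset_span (by simp)) (subset_span (by simp)))

end Dichotomy

section Sublinear

variable {E : Type*} [AddCommGroup E] [Module ℝ E] {φ : E → ℝ}

theorem apply_smul_of_apply_neg (hpos : ∀ c : ℝ, 0 ≤ c → ∀ x, φ (c • x) = c * φ x) {x : E}
    (hodd : φ (-x) = -φ x) (r : ℝ) : φ (r • x) = r * φ x := by
  rcases le_total 0 r with hr | hr
  · exact hpos r hr x
  · rw [← neg_smul_neg, hpos _ (neg_nonneg.mpr hr), hodd]; ring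

theorem apply_smul_add_apply_neg (hpos : ∀ c : ℝ, 0 ≤ c → ∀ x, φ (c • x) = c * φ x)
    (l : ℝ) (x : E) : φ (l • x) + φ (-(l • x)) = |l| * (φ x + φ (-x)) := by
  rcases le_total 0 l with hl | hl
  · rw [← smul_neg, hpos _ hl, hpos _ hl, abs_of_nonneg hl]; ring
  · rw [← neg_smul, ← neg_smul_neg, hpos _ (neg_nonneg.mpr hl), hpos _ (neg_nonneg.mpr hl),
      abs_of_nonpos hl]; ring

theorem apply_smul_sub_mul_of_add_apply_neg_eq {ψ : E → ℝ}
    (hφ : ∀ c : ℝ, 0 ≤ c → ∀ x, φ (c • x) = c * φ x)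
    (hψ : ∀ c : ℝ, 0 ≤ c → ∀ x, ψ (c • x) = c * ψ x) {l : ℝ}
    (hw : ∀ x, φ x + φ (-x) = l * (ψ x + ψ (-x))) (r : ℝ) (x : E) :
    φ (r • x) - l * ψ (r • x) = r * (φ x - l * ψ x) :=
  apply_smul_of_apply_neg (φ := fun x => φ x - l * ψ x)
    (fun c hc x => by simp only [hφ c hc, hψ c hc]; ring) (by linarith [hw x]) r

theorem isLinearOnSpanPair_of_apply_neg (hsub : ∀ x y, φ (x + y) ≤ φ x + φ y)
    (hpos : ∀ c : ℝ, 0 ≤ c → ∀ x, φ (c • x) = c * φ x) {x y : E}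
    (hodd : ∀ p ∈ span ℝ {x, y}, φ (-p) = -φ p) : IsLinearOnSpanPair φ x y := by
  have hadd : ∀ p ∈ span ℝ {x, y}, ∀ q ∈ span ℝ {x, y}, φ (p + q) = φ p + φ q := by
    intro p _ q hq
    have := hsub (p + q) (-q)
    rw [add_neg_cancel_right, hodd q hq] at this
    linarith [hsub p q]
  intro a b
  rw [hadd _ (Submodule.smul_mem _ a (subset_span (by simp)))
      _ (Submodule.smul_mem _ b (subset_span (by simp))),
    apply_smul_of_apply_neg hpos (hodd x (subset_span (by simp))),
    apply_smul_of_apply_neg hpos (hodd y (subset_span (by simp)))]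

theorem exists_pos_forall_eq_mul_of_forall_pair {α : Type*} {w₁ w₂ : α → ℝ}
    (h : ∀ x y, ∃ l > 0, w₁ x = l * w₂ x ∧ w₁ y = l * w₂ y) :
    ∃ l > 0, ∀ x, w₁ x = l * w₂ x := by
  by_cases h0 : ∃ u, w₂ u ≠ 0
  · obtain ⟨u, hu⟩ := h0
    obtain ⟨l, hl, -, hlu⟩ := h u u
    refine ⟨l, hl, fun x => ?_⟩
    obtain ⟨l', -, hx, hl'u⟩ := h x u
    rwa [mul_right_cancel₀ hu (hl'u.symm.trans hlu)] at hx
  · push Not at h0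
    refine ⟨1, one_pos, fun x => ?_⟩
    obtain ⟨l, -, hx, -⟩ := h x x
    rw [hx, h0, mul_zero, mul_zero]

end Sublinear

section SupportFunction

variable {F : Type*} [NormedAddCommGroup F] [InnerProductSpace ℝ F]

noncomputable def supportFunction (K : Set F) (x : F) : ℝ :=
  sSup ((fun y => ⟪y, x⟫) '' K)

variable {K : Set F}

theorem inner_le_supportFunction (hK : IsCompact K) {y : F} (hy : y ∈ K) (x : F) :
    ⟪y, x⟫ ≤ supportFunction K x :=
  le_csSup (hK.image (by fun_prop)).bddAbove (Set.mem_image_of_mem _ hy)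

theorem exists_inner_eq_supportFunction (hK : IsCompact K) (hne : K.Nonempty) (x : F) :
    ∃ y ∈ K, ⟪y, x⟫ = supportFunction K x :=
  (hK.image (by fun_prop)).sSup_mem (hne.image _)

theorem supportFunction_add_le (hK : IsCompact K) (hne : K.Nonempty) (x y : F) :
    supportFunction K (x + y) ≤ supportFunction K x + supportFunction K y := by
  obtain ⟨z, hz, hzeq⟩ := exists_inner_eq_supportFunction hK hne (x + y)
  rw [← hzeq, inner_add_right]
  exact add_le_add (inner_le_supportFunction hK hz x) (inner_le_supportFunction hK hz y)

theorem supportFunction_smul {c : ℝ} (hc : 0 ≤ c) (x : F) :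
    supportFunction K (c • x) = c * supportFunction K x := by
  rw [supportFunction, supportFunction, ← smul_eq_mul, ← Real.sSup_smul_of_nonneg hc,
    ← Set.image_smul, Set.image_image]
  simp only [real_inner_smul_right, smul_eq_mul]

theorem continuous_supportFunction (hK : IsCompact K) : Continuous (supportFunction K) :=
  hK.continuous_sSup (f := fun x y => ⟪y, x⟫) (by fun_prop)

theorem supportFunction_image_starProjection (L : Submodule ℝ F) [L.HasOrthogonalProjection]
    (x : F) :
    supportFunction (L.starProjection '' K) x = supportFunction K (L.starProjection x) := by
  simp only [supportFunction, Set.image_image, Submodule.inner_starProjection_left_eq_right]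

theorem supportFunction_image_add_smul (hK : IsCompact K) (hne : K.Nonempty) (z : F) (l : ℝ)
    (x : F) :
    supportFunction ((fun y => z + l • y) '' K) x = ⟪z, x⟫ + supportFunction K (l • x) := by
  simp only [supportFunction, Set.image_image, inner_add_left, real_inner_smul_left,
    ← real_inner_smul_right]
  rw [(Monotone.map_csSup_of_continuousAt (f := (⟪z, x⟫ + ·)) (by fun_prop)
    (fun _ _ h => by simpa using h) (hne.image _) (hK.image (by fun_prop)).bddAbove),
    Set.image_image]

theorem subset_of_supportFunction_le [CompleteSpace F] {A B : Set F} (hA : IsCompact A)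
    (hB : IsCompact B) (hBc : Convex ℝ B) (hBne : B.Nonempty)
    (h : ∀ x, supportFunction A x ≤ supportFunction B x) : A ⊆ B := by
  intro a ha
  by_contra haB
  obtain ⟨φ, s, hφB, hφa⟩ := geometric_hahn_banach_closed_point hBc hB.isClosed haB
  set y := (InnerProductSpace.toDual ℝ F).symm φ
  have hφ (v : F) : φ v = ⟪v, y⟫ := by rw [real_inner_comm, InnerProductSpace.toDual_symm_apply]
  obtain ⟨b, hb, hby⟩ := exists_inner_eq_supportFunction hB hBne y
  have := hφB b hb
  have := inner_le_supportFunction hA ha y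
  rw [hφ] at *
  linarith [h y]

theorem eq_of_supportFunction_eq [CompleteSpace F] {A B : Set F} (hA : IsCompact A)
    (hAc : Convex ℝ A) (hAne : A.Nonempty) (hB : IsCompact B) (hBc : Convex ℝ B)
    (hBne : B.Nonempty) (h : ∀ x, supportFunction A x = supportFunction B x) : A = B :=
  (subset_of_supportFunction_le hA hB hBc hBne fun x => (h x).le).antisymm
    (subset_of_supportFunction_le hB hA hAc hAne fun x => (h x).ge)

end SupportFunction

section Core

variable {F : Type*} [NormedAddCommGroup F] [InnerProductSpace ℝ F] {K₁ K₂ : Set F}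

theorem exists_inner_eq_of_map_add [CompleteSpace F] {φ : F → ℝ} (hφ : Continuous φ)
    (hadd : ∀ x y, φ (x + y) = φ x + φ y) (hsmul : ∀ (r : ℝ) x, φ (r • x) = r * φ x) :
    ∃ z, ∀ x, φ x = ⟪z, x⟫ :=
  ⟨(InnerProductSpace.toDual ℝ F).symm ⟨⟨⟨φ, hadd⟩, hsmul⟩, hφ⟩, fun x => by
    rw [InnerProductSpace.toDual_symm_apply]; rfl⟩

theorem isLinearOnSpanPair_of_eq_inner_add_mul {φ h : F → ℝ}
    (hsub : ∀ x y, h (x + y) ≤ h x + h y) (hpos : ∀ c : ℝ, 0 ≤ c → ∀ x, h (c • x) = c * h x)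
    {x y z : F} {c : ℝ} (hc : ∀ p ∈ span ℝ {x, y}, c * (h p + h (-p)) = 0)
    (hφ : ∀ p ∈ span ℝ {x, y}, φ p = ⟪z, p⟫ + c * h p) : IsLinearOnSpanPair φ x y := by
  intro a b
  rw [hφ _ (mem_span_pair.mpr ⟨a, b, rfl⟩), hφ x (subset_span (by simp)),
    hφ y (subset_span (by simp)), inner_add_right, real_inner_smul_right, real_inner_smul_right]
  rcases eq_or_ne c 0 with rfl | hc0
  · ring
  · rw [isLinearOnSpanPair_of_apply_neg hsub hpos (fun p hp => by
      linarith [(mul_eq_zero.mp (hc p hp)).resolve_left hc0]) a b]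
    ring

theorem supportFunction_add_neg_eq_of_eq_inner_add {P : Submodule ℝ F} {z : F} {k : ℝ}
    (h : ∀ p ∈ P, supportFunction K₁ p = ⟪z, p⟫ + supportFunction K₂ (k • p)) {p : F}
    (hp : p ∈ P) : supportFunction K₁ p + supportFunction K₁ (-p) =
      |k| * (supportFunction K₂ p + supportFunction K₂ (-p)) := by
  rw [h p hp, h (-p) (neg_mem hp), ← apply_smul_add_apply_neg (fun c hc => supportFunction_smul hc),
    inner_neg_right, smul_neg]
  ring

theorem isLinearOnSpanPair_or_of_supportFunction_eq (hK₂ : IsCompact K₂) (hne₂ : K₂.Nonempty)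
    {l : ℝ}
    (hl : ∀ x, supportFunction K₁ x + supportFunction K₁ (-x) =
      l * (supportFunction K₂ x + supportFunction K₂ (-x)))
    {x y z : F} {k : ℝ} (hk : k ≠ 0)
    (h : ∀ p ∈ span ℝ {x, y}, supportFunction K₁ p = ⟪z, p⟫ + supportFunction K₂ (k • p)) :
    IsLinearOnSpanPair (fun p => supportFunction K₁ p - l * supportFunction K₂ p) x y ∨
      IsLinearOnSpanPair (fun p => supportFunction K₁ p - l * supportFunction K₂ (-p)) x y := by
  rcases hk.lt_or_gt with hk | hk
  · refine .inr (isLinearOnSpanPair_of_eq_inner_add_mul (z := z) (c := -k - l)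
      (h := fun p => supportFunction K₂ (-p))
      (fun p q => by rw [neg_add]; exact supportFunction_add_le hK₂ hne₂ _ _)
      (fun c hc p => by rw [← smul_neg, supportFunction_smul hc]) (fun p hp => ?_)
      (fun p hp => ?_))
    · have := supportFunction_add_neg_eq_of_eq_inner_add h hp
      rw [abs_of_neg hk] at this
      rw [neg_neg]
      linear_combination hl p - this
    · rw [h p hp, ← neg_smul_neg, supportFunction_smul (by linarith)]; ring
  · refine .inl (isLinearOnSpanPair_of_eq_inner_add_mul (z := z) (c := k - l)
      (supportFunction_add_le hK₂ hne₂) (fun c hc p => supportFunction_smul hc p)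
      (fun p hp => ?_) (fun p hp => ?_))
    · have := supportFunction_add_neg_eq_of_eq_inner_add h hp
      rw [abs_of_pos hk] at this
      linear_combination hl p - this
    · rw [h p hp, supportFunction_smul hk.le]; ring

theorem exists_supportFunction_eq_of_forall_span_pair [CompleteSpace F] (hK₁ : IsCompact K₁)
    (hK₂ : IsCompact K₂) (hne₂ : K₂.Nonempty)
    (h : ∀ x y : F, ∃ z : F, ∃ k : ℝ, k ≠ 0 ∧
      ∀ p ∈ span ℝ {x, y}, supportFunction K₁ p = ⟪z, p⟫ + supportFunction K₂ (k • p)) :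
    ∃ z : F, ∃ k : ℝ, k ≠ 0 ∧ ∀ x, supportFunction K₁ x = ⟪z, x⟫ + supportFunction K₂ (k • x) := by
  set h₁ := supportFunction K₁
  set h₂ := supportFunction K₂
  have hpos₂ : ∀ c : ℝ, 0 ≤ c → ∀ x, h₂ (c • x) = c * h₂ x := fun c hc => supportFunction_smul hc
  obtain ⟨l, hl, hwidth⟩ : ∃ l > 0, ∀ x, h₁ x + h₁ (-x) = l * (h₂ x + h₂ (-x)) := by
    refine exists_pos_forall_eq_mul_of_forall_pair fun x y => ?_
    obtain ⟨z, k, hk, hzk⟩ := h x y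
    exact ⟨|k|, abs_pos.mpr hk, supportFunction_add_neg_eq_of_eq_inner_add hzk
      (subset_span (by simp)), supportFunction_add_neg_eq_of_eq_inner_add hzk
      (subset_span (by simp))⟩
  set f := fun x => h₁ x - l * h₂ x
  set g := fun x => h₁ x - l * h₂ (-x)
  have hfh : ∀ (r : ℝ) x, f (r • x) = r * f x :=
    apply_smul_sub_mul_of_add_apply_neg_eq (fun c hc => supportFunction_smul hc) hpos₂ hwidth
  have hgh : ∀ (r : ℝ) x, g (r • x) = r * g x :=
    apply_smul_sub_mul_of_add_apply_neg_eq (ψ := fun x => h₂ (-x))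
      (fun c hc => supportFunction_smul hc) (fun c hc x => by rw [← smul_neg, hpos₂ c hc])
      fun x => by rw [neg_neg, hwidth, add_comm (h₂ (-x))]
  have hf : Continuous f := by
    have := continuous_supportFunction hK₁; have := continuous_supportFunction hK₂; fun_prop
  have hg : Continuous g := by
    have := continuous_supportFunction hK₁; have := continuous_supportFunction hK₂; fun_prop
  rcases map_add_or_map_add_of_isLinearOnSpanPair hf hg hfh hgh (fun x y => by
      obtain ⟨z, k, hk, hzk⟩ := h x y
      exact isLinearOnSpanPair_or_of_supportFunction_eq hK₂ hne₂ hwidth hk hzk) with hadd | hadd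
  · obtain ⟨z, hz⟩ := exists_inner_eq_of_map_add hf hadd hfh
    refine ⟨z, l, hl.ne', fun x => ?_⟩
    rw [hpos₂ l hl.le]
    linarith [hz x]
  · obtain ⟨z, hz⟩ := exists_inner_eq_of_map_add hg hadd hgh
    refine ⟨z, -l, by simpa using hl.ne', fun x => ?_⟩
    rw [← neg_smul_neg, neg_neg, hpos₂ l hl.le]
    linarith [hz x]

end Core

theorem Submodule.exists_le_finrank_eq {K V : Type*} [DivisionRing K] [AddCommGroup V]
    [Module K V] [FiniteDimensional K V] {T : Submodule K V} {m : ℕ}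
    (hT : Module.finrank K T ≤ m) (hm : m ≤ Module.finrank K V) :
    ∃ L : Submodule K V, T ≤ L ∧ Module.finrank K L = m := by
  induction m, hT using Nat.le_induction with
  | base => exact ⟨T, le_rfl, rfl⟩
  | succ m _ ih =>
    obtain ⟨L, hTL, hL⟩ := ih (by omega)
    obtain ⟨v, -, hv⟩ :=
      SetLike.exists_of_lt (Submodule.lt_top_of_finrank_lt_finrank (by omega) : L < ⊤)
    exact ⟨L ⊔ span K {v}, hTL.trans le_sup_left, by rw [finrank_sup_span_singleton hv, hL]⟩

theorem Submodule.finrank_sup_span_pair_le {K V : Type*} [DivisionRing K] [AddCommGroup V]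
    [Module K V] [FiniteDimensional K V] (S : Submodule K V) (x y : V) :
    Module.finrank K ↥(S ⊔ span K {x, y}) ≤ Module.finrank K S + 2 := by
  classical
  have := Submodule.finrank_add_le_finrank_add_finrank S (span K {x, y})
  have := finrank_span_le_card (R := K) ({x, y} : Set V)
  have := Finset.card_le_two (a := x) (b := y)
  simp only [Set.toFinset_insert, Set.toFinset_singleton] at *
  omega

section Homothety

variable {n : ℕ}

theorem Homothetic.image_affineMap {X Y : Set (EuclideanSpace ℝ (Fin n))} (h : Homothetic X Y)
    (A : EuclideanSpace ℝ (Fin n) →ᵃ[ℝ] EuclideanSpace ℝ (Fin n)) :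
    Homothetic (A '' X) (A '' Y) := by
  obtain ⟨z, l, hl, rfl⟩ := h
  refine ⟨A z - l • A 0, l, hl, ?_⟩
  rw [Set.image_image, Set.image_image]
  refine Set.image_congr fun y _ => ?_
  have hA (v) : A v = A.linear v + A 0 := by simpa using A.map_vadd 0 v
  rw [hA (z + l • y), hA z, hA y, map_add, map_smul]
  module

theorem Homothetic.image_planeProj {X Y : Set (EuclideanSpace ℝ (Fin n))} (h : Homothetic X Y)
    (p : EuclideanSpace ℝ (Fin n)) (L : Submodule ℝ (EuclideanSpace ℝ (Fin n))) :
    Homothetic (planeProj p L '' X) (planeProj p L '' Y) :=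
  h.image_affineMap ⟨planeProj p L, L.starProjection, fun x v => by
    simp only [planeProj, vadd_eq_add, add_sub_assoc, map_add, Submodule.coe_add,
      ContinuousLinearMap.coe_coe, Submodule.starProjection_apply]
    abel⟩

theorem homothetic_of_supportFunction_eq {K₁ K₂ : Set (EuclideanSpace ℝ (Fin n))}
    (hK₁ : IsCompact K₁) (hK₂ : IsCompact K₂) (hcv₁ : Convex ℝ K₁) (hcv₂ : Convex ℝ K₂)
    (hne₁ : K₁.Nonempty) (hne₂ : K₂.Nonempty) {z : EuclideanSpace ℝ (Fin n)} {k : ℝ} (hk : k ≠ 0)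
    (h : ∀ x, supportFunction K₁ x = ⟪z, x⟫ + supportFunction K₂ (k • x)) : Homothetic K₁ K₂ :=
  ⟨z, k, hk, eq_of_supportFunction_eq hK₁ hcv₁ hne₁ (hK₂.image (by fun_prop)) (hcv₂.affinity z k)
    (hne₂.image _) fun x => by rw [supportFunction_image_add_smul hK₂ hne₂, h]⟩

theorem planeProj_zero (L : Submodule ℝ (EuclideanSpace ℝ (Fin n))) :
    planeProj 0 L = L.starProjection :=
  funext fun x => by simp [planeProj]

theorem exists_supportFunction_eq_of_homothetic_planeProj {K₁ K₂ : Set (EuclideanSpace ℝ (Fin n))}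
    (hK₂ : IsCompact K₂) (hne₂ : K₂.Nonempty) {L : Submodule ℝ (EuclideanSpace ℝ (Fin n))}
    (h : Homothetic (planeProj 0 L '' K₁) (planeProj 0 L '' K₂)) :
    ∃ z : EuclideanSpace ℝ (Fin n), ∃ k : ℝ, k ≠ 0 ∧
      ∀ x ∈ L, supportFunction K₁ x = ⟪z, x⟫ + supportFunction K₂ (k • x) := by
  rw [planeProj_zero] at h
  obtain ⟨z, k, hk, heq⟩ := h
  refine ⟨z, k, hk, fun x hx => ?_⟩
  have hfix : ∀ y ∈ L, L.starProjection y = y := fun y hy => L.starProjection_eq_self_iff.mpr hy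
  calc supportFunction K₁ x = supportFunction (L.starProjection '' K₁) x := by
        rw [supportFunction_image_starProjection, hfix x hx]
    _ = ⟪z, x⟫ + supportFunction K₂ (k • x) := by
        rw [heq, supportFunction_image_add_smul (hK₂.image (by fun_prop)) (hne₂.image _),
          supportFunction_image_starProjection, hfix _ (L.smul_mem k hx)]

end Homothety

/-- Compact convex sets `K₁` and `K₂` in `ℝⁿ` are homothetic if and only if, for fixed
`r ≤ m - 2 ≤ n - 3` and a fixed `r`-dimensional subspace `S`, their orthogonal
projections on every `m`-dimensional plane of `ℝⁿ` whose direction contains `S`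
are homothetic. -/
theorem homothetic_iff_projections_through_subspace_homothetic_compact
    (n m r : ℕ) (hrm : r + 2 ≤ m) (hmn : m + 1 ≤ n)
    (S : Submodule ℝ (EuclideanSpace ℝ (Fin n))) (hS : Module.finrank ℝ S = r)
    (K₁ K₂ : Set (EuclideanSpace ℝ (Fin n)))
    (hne₁ : K₁.Nonempty) (hne₂ : K₂.Nonempty)
    (hc₁ : IsCompact K₁) (hc₂ : IsCompact K₂)
    (hcv₁ : Convex ℝ K₁) (hcv₂ : Convex ℝ K₂) :
    Homothetic K₁ K₂ ↔
      ∀ (p : EuclideanSpace ℝ (Fin n)) (L : Submodule ℝ (EuclideanSpace ℝ (Fin n))),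
        Module.finrank ℝ L = m → S ≤ L →
        Homothetic (planeProj p L '' K₁) (planeProj p L '' K₂) := by
  refine ⟨fun h p L _ _ => h.image_planeProj p L, fun hyp => ?_⟩
  obtain ⟨z, k, hk, hzk⟩ := exists_supportFunction_eq_of_forall_span_pair hc₁ hc₂ hne₂
    fun x y => by
      obtain ⟨L, hle, hL⟩ := Submodule.exists_le_finrank_eq (m := m)
        ((S.finrank_sup_span_pair_le x y).trans (by omega))
        (by rw [finrank_euclideanSpace_fin]; omega)
      obtain ⟨z, k, hk, hzk⟩ := exists_supportFunction_eq_of_homothetic_planeProj hc₂ hne₂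
        (hyp 0 L hL (le_sup_left.trans hle))
      exact ⟨z, k, hk, fun p hp => hzk p (hle (mem_sup_right hp))⟩
  exact homothetic_of_supportFunction_eq hc₁ hc₂ hcv₁ hcv₂ hne₁ hne₂ hk hzk
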